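/- Let S be a leaf SCC of an information-flow graph G of a single-uniprior index-coding instance, with equal message lengths q. Then broadcasting uncoded the messages of all non-leaf vertices outside leaf SCCs together with a (|S'|−1)q-bit cyclic code for each leaf SCC S' yields a valid index code, proving ℓ*(G) ≤ qn − q|L(G)| − q·(number of leaf SCCs). -/

import Mathlib

/-- A valid index code for a single-uniprior index-coding instance on the
information-flow graph `A` on `Fin n`, where message `x i` consists of `q i` uniform
bits and receiver `i` knows `x i` a priori: whenever there is an arc `(j → i)`,
receiver `i` can decode `x j` from the codeword and its own message, i.e. `x j` is
determined by `(E x, x i)`. -/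
def IsIndexCode {n : ℕ} (A : Fin n → Fin n → Prop) (q : Fin n → ℕ) {ℓ : ℕ}
    (E : (∀ i, Fin (q i) → Bool) → (Fin ℓ → Bool)) : Prop :=
  ∀ i j, A j i → ∀ x y, E x = E y → x i = y i → x j = y j

/-- The optimal index codelength `ℓ*(G)`: the minimum number of broadcast bits of a
valid index code. -/
noncomputable def optLen {n : ℕ} (A : Fin n → Fin n → Prop) (q : Fin n → ℕ) : ℕ :=
  sInf {ℓ : ℕ | ∃ E : (∀ i, Fin (q i) → Bool) → (Fin ℓ → Bool), IsIndexCode A q E}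

/-- A leaf vertex of a directed graph: a vertex with no outgoing arcs. -/
def IsLeafVertex {V : Type*} (A : V → V → Prop) (i : V) : Prop := ∀ j, ¬ A i j

/-- A strongly connected component: a nonempty set of vertices, any two of which are
mutually reachable, and which is maximal with this property. -/
def IsSCC {V : Type*} (A : V → V → Prop) (S : Set V) : Prop :=
  S.Nonempty ∧ (∀ i ∈ S, ∀ j ∈ S, Relation.ReflTransGen A i j) ∧
    ∀ k, (∀ j ∈ S, Relation.ReflTransGen A k j ∧ Relation.ReflTransGen A j k) → k ∈ S

/-- A leaf SCC: a non-trivial SCC (at least two vertices) with no arc leaving it. -/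
def IsLeafSCC {V : Type*} (A : V → V → Prop) (S : Set V) : Prop :=
  IsSCC A S ∧ (∃ i ∈ S, ∃ j ∈ S, i ≠ j) ∧ ∀ i ∈ S, ∀ j, A i j → j ∈ S

/-! Within a leaf SCC `S` with a chosen root `r`, broadcasting `x v ⊕ x r` for every `v ∈ S \ {r}`
costs `(|S| - 1) q` bits, like the cyclic code, and is decodable by every receiver of `S`: a receiver
`i ∈ S` recovers `x r` from `x i ⊕ x r` and then every `x v`. No arc leaves `S`, so only receivers
in `S` request messages of `S`. All other non-leaf vertices are sent uncoded, and leaf vertices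
are requested by nobody. -/

section Graph

variable {V : Type*} {A : V → V → Prop}

theorem IsSCC.eq_of_mem {S T : Set V} (hS : IsSCC A S) (hT : IsSCC A T) {x : V}
    (hxS : x ∈ S) (hxT : x ∈ T) : S = T := by
  have subset : ∀ {S T : Set V}, IsSCC A S → IsSCC A T → x ∈ S → x ∈ T → S ⊆ T :=
    fun hS hT hxS hxT j hj => hT.2.2 j fun k hk =>
      ⟨(hS.2.1 j hj x hxS).trans (hT.2.1 x hxT k hk),
        (hT.2.1 k hk x hxT).trans (hS.2.1 x hxS j hj)⟩
  exact (subset hS hT hxS hxT).antisymm (subset hT hS hxT hxS)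

theorem IsLeafSCC.not_isLeafVertex {S : Set V} (hS : IsLeafSCC A S) {i : V} (hi : i ∈ S) :
    ¬ IsLeafVertex A i := by
  obtain ⟨a, ha, b, hb, hab⟩ := hS.2.1
  obtain ⟨j, hj, hji⟩ : ∃ j ∈ S, j ≠ i := by
    by_cases hai : a = i
    · exact ⟨b, hb, fun hbi => hab (hai.trans hbi.symm)⟩
    · exact ⟨a, ha, hai⟩
  rcases Relation.reflTransGen_iff_eq_or_transGen.1 (hS.1.2.1 i hi j hj) with h | h
  · exact absurd h hji
  · obtain ⟨c, hc, -⟩ := Relation.TransGen.head'_iff.1 h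
    exact fun hleaf => hleaf c hc

noncomputable def IsLeafSCC.root {S : Set V} (hS : IsLeafSCC A S) : V := hS.1.1.some

theorem IsLeafSCC.root_mem {S : Set V} (hS : IsLeafSCC A S) : hS.root ∈ S := hS.1.1.some_mem

variable (A) in
open Classical in
noncomputable def leafRoot (v : V) : Option V :=
  if h : ∃ S, IsLeafSCC A S ∧ v ∈ S then some h.choose_spec.1.root else none

theorem leafRoot_eq_some_root {S : Set V} (hS : IsLeafSCC A S) {v : V} (hv : v ∈ S) :
    leafRoot A v = some hS.root := by
  have h : ∃ S, IsLeafSCC A S ∧ v ∈ S := ⟨S, hS, hv⟩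
  obtain rfl : h.choose = S := h.choose_spec.1.1.eq_of_mem hS.1 h.choose_spec.2 hv
  rw [leafRoot, dif_pos h]

theorem leafRoot_eq_none {v : V} (hv : ¬ ∃ S, IsLeafSCC A S ∧ v ∈ S) : leafRoot A v = none := by
  rw [leafRoot, dif_neg hv]

theorem exists_root_eq_of_leafRoot_eq_self {v : V} (hv : leafRoot A v = some v) :
    ∃ S, ∃ hS : IsLeafSCC A S, hS.root = v := by
  by_cases h : ∃ S, IsLeafSCC A S ∧ v ∈ S
  · obtain ⟨S, hS, hvS⟩ := h
    exact ⟨S, hS, Option.some_injective _ ((leafRoot_eq_some_root hS hvS).symm.trans hv)⟩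
  · simp [leafRoot_eq_none h] at hv

variable (A)

def IsSentVertex (v : V) : Prop := ¬ IsLeafVertex A v ∧ leafRoot A v ≠ some v

theorem ncard_setOf_leafRoot_eq_self :
    {v | leafRoot A v = some v}.ncard = {S : Set V | IsLeafSCC A S}.ncard := by
  let root : {S : Set V // IsLeafSCC A S} → V := fun S => S.2.root
  have root_injective : Function.Injective root := by
    rintro ⟨S, hS⟩ ⟨T, hT⟩ (h : hS.root = hT.root)
    exact Subtype.ext (hS.1.eq_of_mem hT.1 hS.root_mem (h ▸ hT.root_mem))
  have range_root : Set.range root = {v | leafRoot A v = some v} := by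
    ext v
    constructor
    · rintro ⟨S, rfl⟩
      exact leafRoot_eq_some_root S.2 S.2.root_mem
    · intro hv
      obtain ⟨S, hS, rfl⟩ := exists_root_eq_of_leafRoot_eq_self hv
      exact ⟨⟨S, hS⟩, rfl⟩
  rw [← range_root, Set.ncard_range_of_injective root_injective, ← Nat.card_coe_set_eq]
  rfl

theorem nat_card_isSentVertex [Finite V] :
    Nat.card {v // IsSentVertex A v} =
      Nat.card V - {v | IsLeafVertex A v}.ncard - {S : Set V | IsLeafSCC A S}.ncard := by
  have disjoint : Disjoint {v | IsLeafVertex A v} {v | leafRoot A v = some v} :=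
    Set.disjoint_left.2 fun v hleaf hroot => by
      obtain ⟨S, hS, rfl⟩ := exists_root_eq_of_leafRoot_eq_self hroot
      exact hS.not_isLeafVertex hS.root_mem hleaf
  calc Nat.card {v // IsSentVertex A v}
      = ({v | IsLeafVertex A v} ∪ {v | leafRoot A v = some v})ᶜ.ncard := by
        rw [← Nat.card_coe_set_eq]
        congr 2
        ext v
        simp [IsSentVertex]
    _ = _ := by
      rw [Set.ncard_compl, Set.ncard_union_eq disjoint, ncard_setOf_leafRoot_eq_self, Nat.sub_sub]

end Graph

section Code

variable {V α : Type*} (A : V → V → Prop)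

noncomputable def leafSCCCode (x : V → α → Bool) (p : {v // IsSentVertex A v} × α) : Bool :=
  (leafRoot A p.1.1).elim (x p.1.1 p.2) fun r => xor (x p.1.1 p.2) (x r p.2)

theorem leafSCCCode_decodes {i j : V} (hji : A j i) {x y : V → α → Bool}
    (hcode : leafSCCCode A x = leafSCCCode A y) (hi : x i = y i) : x j = y j := by
  funext k
  by_cases hj : ∃ S, IsLeafSCC A S ∧ j ∈ S
  · obtain ⟨S, hS, hjS⟩ := hj
    have star : ∀ v ∈ S, xor (x v k) (x hS.root k) = xor (y v k) (y hS.root k) := by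
      intro v hv
      by_cases hvr : v = hS.root
      · subst hvr; simp
      have hsent : IsSentVertex A v := ⟨hS.not_isLeafVertex hv,
        by rw [leafRoot_eq_some_root hS hv]; exact fun h => hvr (Option.some_injective _ h).symm⟩
      simpa [leafSCCCode, leafRoot_eq_some_root hS hv] using congrFun hcode (⟨v, hsent⟩, k)
    have hroot : x hS.root k = y hS.root k := by
      simpa [hi] using star i (hS.2.2 j hjS i hji)
    simpa [hroot] using star j hjS
  · have hsent : IsSentVertex A j := ⟨fun hleaf => hleaf i hji, by simp [leafRoot_eq_none hj]⟩
    simpa [leafSCCCode, leafRoot_eq_none hj] using congrFun hcode (⟨j, hsent⟩, k)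

end Code

theorem exists_isIndexCode_of_decodes {n : ℕ} {A : Fin n → Fin n → Prop} {q : Fin n → ℕ}
    {ι : Type*} [Finite ι] {ℓ : ℕ} (hι : Nat.card ι = ℓ) (F : (∀ i, Fin (q i) → Bool) → ι → Bool)
    (hF : ∀ i j, A j i → ∀ x y, F x = F y → x i = y i → x j = y j) :
    ∃ E : (∀ i, Fin (q i) → Bool) → (Fin ℓ → Bool), IsIndexCode A q E :=
  ⟨fun x => F x ∘ (Finite.equivFinOfCardEq hι).symm, fun i j hji x y hE =>
    hF i j hji x y ((Finite.equivFinOfCardEq hι).symm.surjective.injective_comp_right hE)⟩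

theorem optLen_le_of_isIndexCode {n : ℕ} {A : Fin n → Fin n → Prop} {q : Fin n → ℕ} {ℓ : ℕ}
    {E : (∀ i, Fin (q i) → Bool) → (Fin ℓ → Bool)} (hE : IsIndexCode A q E) : optLen A q ≤ ℓ :=
  Nat.sInf_le ⟨E, hE⟩

/-- Achievability for equal message lengths `q`: sending uncoded the messages of all
non-leaf vertices outside leaf SCCs, together with a `(|S'|−1)q`-bit cyclic code for
each leaf SCC `S'`, yields a valid index code; hence
`ℓ*(G) ≤ qn − q|L(G)| − q·(number of leaf SCCs)`. -/
theorem optLen_upper_cyclic {n q : ℕ} (A : Fin n → Fin n → Prop) :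
    (∃ E : (∀ _ : Fin n, Fin q → Bool) →
        (Fin (q * n - q * {i : Fin n | IsLeafVertex A i}.ncard -
          q * {S : Set (Fin n) | IsLeafSCC A S}.ncard) → Bool),
      IsIndexCode A (fun _ => q) E) ∧
    optLen A (fun _ => q) ≤
      q * n - q * {i : Fin n | IsLeafVertex A i}.ncard -
        q * {S : Set (Fin n) | IsLeafSCC A S}.ncard := by
  have hcard : Nat.card ({v // IsSentVertex A v} × Fin q) =
      q * n - q * {i : Fin n | IsLeafVertex A i}.ncard -
        q * {S : Set (Fin n) | IsLeafSCC A S}.ncard := by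
    rw [Nat.card_prod, nat_card_isSentVertex, Nat.card_fin, Nat.card_fin, Nat.mul_comm,
      Nat.mul_sub, Nat.mul_sub]
  obtain ⟨E, hE⟩ := exists_isIndexCode_of_decodes hcard (leafSCCCode A)
    fun _ _ hji _ _ hcode hi => leafSCCCode_decodes A hji hcode hi
  exact ⟨⟨E, hE⟩, optLen_le_of_isIndexCode hE⟩
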